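/- arXiv:2108.06049 — 3 statements merged into one kernel-verified Lean document; each statement's English description precedes it below -/
import Mathlib

section
/- Let X_1,...,X_n be independent {0,1}-valued random variables with Pr[X_i = 1] = p for all i, and let f : {0,1}^n → ℝ satisfy the bounded-differences property with constant c (i.e., changing any single coordinate changes f by at most c). Then for every t > 0, Pr[|f(X) - E[f(X)]| ≥ t] ≤ 2·exp(-t² / (2 c² n p (1 - p) + 2 c t / 3)). In particular, when p = o(1), this bound is asymptotically stronger than the classical McDiarmid bound 2·exp(-2t²/(c²n)). -/
/-!
The law of `(X_i)` has weight `∏ (if x_i then p else 1 - p)` at `x`, so everything reduces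
to finite sums over the cube. Conditioning on the first coordinate, `f - E f` is a function of
the other coordinates plus a centred two-point variable with values `(1 - p) d` and `-p d`,
where `|d| ≤ c`. Bernstein's bound `exp x ≤ 1 + x + x² / (2 (1 - u / 3))` for `x ≤ u < 3` gives
that variable the moment generating function bound `exp (p (1 - p) c² λ² / (2 (1 - λ c / 3)))`,
and induction on `n` multiplies these. Chernoff's bound with `λ = t / (V + c t / 3)`,
`V = n p (1 - p) c²`, gives the upper tail; the lower tail is the upper tail of `-f`.
-/

open MeasureTheory ProbabilityTheory Real

/-- A function on Boolean cubes has the bounded-differences property with constant `c`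
if changing any single coordinate changes its value by at most `c`. -/
def BoundedDifferences {n : ℕ} (f : (Fin n → Bool) → ℝ) (c : ℝ) : Prop :=
  ∀ (x x' : Fin n → Bool) (i : Fin n),
    (∀ j : Fin n, j ≠ i → x j = x' j) → |f x - f x'| ≤ c

open Finset
open scoped Nat

def bernoulliWeight (p : ℝ) {n : ℕ} (x : Fin n → Bool) : ℝ :=
  ∏ i, if x i then p else 1 - p

def bernoulliExpect (p : ℝ) {n : ℕ} (g : (Fin n → Bool) → ℝ) : ℝ :=
  ∑ x, bernoulliWeight p x * g x

section BernoulliCube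

variable {p : ℝ} {n : ℕ}

lemma bernoulliWeight_nonneg (hp : 0 ≤ p) (hp1 : p ≤ 1) (x : Fin n → Bool) :
    0 ≤ bernoulliWeight p x :=
  prod_nonneg fun i _ => by cases x i <;> simp [hp, hp1]

lemma bernoulliWeight_cons (b : Bool) (y : Fin n → Bool) :
    bernoulliWeight p (Fin.cons b y : Fin (n + 1) → Bool) =
      (if b then p else 1 - p) * bernoulliWeight p y := by
  simp [bernoulliWeight, Fin.prod_univ_succ]

lemma sum_bernoulliWeight_mul_succ (F : (Fin (n + 1) → Bool) → ℝ) :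
    ∑ x, bernoulliWeight p x * F x =
      ∑ y, bernoulliWeight p y *
        (p * F (Fin.cons true y) + (1 - p) * F (Fin.cons false y)) := by
  rw [← (Fin.consEquiv fun _ => Bool).sum_comp, Fintype.sum_prod_type_right]
  refine sum_congr rfl fun y _ => ?_
  change ∑ b : Bool, bernoulliWeight p (Fin.cons b y : Fin (n + 1) → Bool) *
    F (Fin.cons b y) = _
  simp only [Fintype.sum_bool, bernoulliWeight_cons, Bool.false_eq_true, ↓reduceIte]
  ring

lemma bernoulliExpect_neg (g : (Fin n → Bool) → ℝ) :
    bernoulliExpect p (fun x => -g x) = -bernoulliExpect p g := by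
  simp [bernoulliExpect]

end BernoulliCube

namespace BoundedDifferences

variable {n : ℕ} {c : ℝ} {g : (Fin n → Bool) → ℝ}

lemma neg (hg : BoundedDifferences g c) : BoundedDifferences (fun x => -g x) c :=
  fun x x' i h => by
    rw [neg_sub_neg, abs_sub_comm]
    exact hg x x' i h

lemma convex_combination {g₁ g₂ : (Fin n → Bool) → ℝ} {p : ℝ} (hp : 0 ≤ p) (hp1 : p ≤ 1)
    (h₁ : BoundedDifferences g₁ c) (h₂ : BoundedDifferences g₂ c) :
    BoundedDifferences (fun x => p * g₁ x + (1 - p) * g₂ x) c := by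
  intro x x' i h
  have hq : 0 ≤ 1 - p := sub_nonneg.2 hp1
  calc |p * g₁ x + (1 - p) * g₂ x - (p * g₁ x' + (1 - p) * g₂ x')|
      = |p * (g₁ x - g₁ x') + (1 - p) * (g₂ x - g₂ x')| := by ring_nf
    _ ≤ p * |g₁ x - g₁ x'| + (1 - p) * |g₂ x - g₂ x'| := by
      refine (abs_add_le _ _).trans_eq ?_
      rw [abs_mul, abs_mul, abs_of_nonneg hp, abs_of_nonneg hq]
    _ ≤ p * c + (1 - p) * c := by gcongr <;> [exact h₁ x x' i h; exact h₂ x x' i h]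
    _ = c := by ring

lemma comp_cons {g : (Fin (n + 1) → Bool) → ℝ} (hg : BoundedDifferences g c) (b : Bool) :
    BoundedDifferences (fun y => g (Fin.cons b y)) c := fun y y' i h =>
  hg _ _ i.succ fun j hj => by
    cases j using Fin.cases with
    | zero => rfl
    | succ k => simpa using h k (fun hk => hj (hk ▸ rfl))

lemma abs_sub_cons_le {g : (Fin (n + 1) → Bool) → ℝ} (hg : BoundedDifferences g c)
    (y : Fin n → Bool) : |g (Fin.cons true y) - g (Fin.cons false y)| ≤ c :=
  hg _ _ 0 fun j hj => by
    cases j using Fin.cases with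
    | zero => exact absurd rfl hj
    | succ k => simp

end BoundedDifferences

lemma exp_le_one_add_add_sq_div_two {x : ℝ} (hx : x ≤ 0) : exp x ≤ 1 + x + x ^ 2 / 2 := by
  have hq : 0 < 1 + -x + (-x) ^ 2 / 2 := by nlinarith
  calc exp x = (exp (-x))⁻¹ := by rw [exp_neg, inv_inv]
    _ ≤ (1 + -x + (-x) ^ 2 / 2)⁻¹ :=
      inv_anti₀ hq (quadratic_le_exp_of_nonneg (neg_nonneg.2 hx))
    _ ≤ 1 + x + x ^ 2 / 2 := by
      -- `(1 + x + x²/2) (1 - x + x²/2) = 1 + x⁴/4`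
      rw [inv_le_iff_one_le_mul₀ hq]
      nlinarith [sq_nonneg (x ^ 2)]

lemma exp_le_one_add_add_sq_div_of_lt_three {x : ℝ} (hx : 0 ≤ x) (hx3 : x < 3) :
    exp x ≤ 1 + x + x ^ 2 / (2 * (1 - x / 3)) := by
  have htail : HasSum (fun k : ℕ => x ^ (k + 2) / (k + 2)!) (exp x - (1 + x)) := by
    have h := (hasSum_nat_add_iff' 2).2
      (exp_eq_exp_ℝ ▸ NormedSpace.expSeries_div_hasSum_exp (𝔸 := ℝ) x)
    simpa [sum_range_succ, add_comm] using h
  have hgeom : HasSum (fun k : ℕ => x ^ 2 / 2 * (x / 3) ^ k) (x ^ 2 / 2 * (1 - x / 3)⁻¹) :=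
    (hasSum_geometric_of_lt_one (by positivity) (by linarith)).mul_left _
  have hterm (k : ℕ) : x ^ (k + 2) / (k + 2)! ≤ x ^ 2 / 2 * (x / 3) ^ k := by
    have hfact : (2 * 3 ^ k : ℝ) ≤ (k + 2)! := by
      rw [add_comm k]
      exact_mod_cast Nat.factorial_mul_pow_le_factorial (m := 2) (n := k)
    rw [div_le_iff₀ (by positivity)]
    calc x ^ (k + 2) = x ^ 2 / 2 * (x / 3) ^ k * (2 * 3 ^ k) := by
          rw [div_pow]; field_simp; ring
      _ ≤ x ^ 2 / 2 * (x / 3) ^ k * (k + 2)! := by gcongr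
  have := hasSum_le hterm htail hgeom
  have h3 : 0 < 1 - x / 3 := by linarith
  calc exp x ≤ 1 + x + x ^ 2 / 2 * (1 - x / 3)⁻¹ := by linarith
    _ = 1 + x + x ^ 2 / (2 * (1 - x / 3)) := by field_simp

lemma exp_le_one_add_add_sq_div_of_le {x u : ℝ} (hxu : x ≤ u) (hu : 0 ≤ u) (hu3 : u < 3) :
    exp x ≤ 1 + x + x ^ 2 / (2 * (1 - u / 3)) := by
  rcases le_total x 0 with hx | hx
  · calc exp x ≤ 1 + x + x ^ 2 / 2 := exp_le_one_add_add_sq_div_two hx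
      _ ≤ 1 + x + x ^ 2 / (2 * (1 - u / 3)) := by
        gcongr
        · linarith
        · linarith
  · calc exp x ≤ 1 + x + x ^ 2 / (2 * (1 - x / 3)) :=
          exp_le_one_add_add_sq_div_of_lt_three hx (hxu.trans_lt hu3)
      _ ≤ 1 + x + x ^ 2 / (2 * (1 - u / 3)) := by
        gcongr
        linarith

lemma two_point_mgf_le {p c lam d : ℝ} (hp : 0 ≤ p) (hp1 : p ≤ 1) (hlam : 0 ≤ lam)
    (hlamc : lam * c < 3) (hd : |d| ≤ c) :
    p * exp (lam * ((1 - p) * d)) + (1 - p) * exp (lam * (-(p * d))) ≤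
      exp (p * (1 - p) * c ^ 2 * (lam ^ 2 / (2 * (1 - lam * c / 3)))) := by
  obtain ⟨hd₁, hd₂⟩ := abs_le.1 hd
  have hq : 0 ≤ 1 - p := sub_nonneg.2 hp1
  have hu : 0 ≤ lam * c := mul_nonneg hlam ((abs_nonneg d).trans hd)
  set D := 2 * (1 - lam * c / 3)
  have hD : 0 < D := by simp only [D]; linarith
  have hup : lam * ((1 - p) * d) ≤ lam * c := by gcongr; nlinarith
  have hdown : lam * (-(p * d)) ≤ lam * c := by gcongr; nlinarith
  have hvar : p * (1 - p) * lam ^ 2 * d ^ 2 ≤ p * (1 - p) * lam ^ 2 * c ^ 2 :=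
    mul_le_mul_of_nonneg_left (sq_le_sq' hd₁ hd₂) (mul_nonneg (mul_nonneg hp hq) (sq_nonneg _))
  calc p * exp (lam * ((1 - p) * d)) + (1 - p) * exp (lam * (-(p * d)))
      ≤ p * (1 + lam * ((1 - p) * d) + (lam * ((1 - p) * d)) ^ 2 / D) +
          (1 - p) * (1 + lam * (-(p * d)) + (lam * (-(p * d))) ^ 2 / D) := by
        gcongr
        · exact exp_le_one_add_add_sq_div_of_le hup hu hlamc
        · exact exp_le_one_add_add_sq_div_of_le hdown hu hlamc
    -- the linear terms cancel since the two-point variable is centred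
    _ = 1 + p * (1 - p) * lam ^ 2 * d ^ 2 / D := by field_simp; ring
    _ ≤ 1 + p * (1 - p) * lam ^ 2 * c ^ 2 / D := by gcongr
    _ = 1 + p * (1 - p) * c ^ 2 * (lam ^ 2 / D) := by ring
    _ ≤ exp (p * (1 - p) * c ^ 2 * (lam ^ 2 / D)) := by rw [add_comm]; exact add_one_le_exp _

theorem sum_bernoulliWeight_mul_exp_le {p c lam : ℝ} (hp : 0 ≤ p) (hp1 : p ≤ 1)
    (hlam : 0 ≤ lam) (hlamc : lam * c < 3) {n : ℕ} (g : (Fin n → Bool) → ℝ)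
    (hg : BoundedDifferences g c) :
    ∑ x, bernoulliWeight p x * exp (lam * (g x - bernoulliExpect p g)) ≤
      exp (n * (p * (1 - p) * c ^ 2 * (lam ^ 2 / (2 * (1 - lam * c / 3))))) := by
  set B := p * (1 - p) * c ^ 2 * (lam ^ 2 / (2 * (1 - lam * c / 3)))
  induction n with
  | zero => simp [bernoulliExpect, bernoulliWeight]
  | succ n ih =>
    set h : (Fin n → Bool) → ℝ :=
      fun y => p * g (Fin.cons true y) + (1 - p) * g (Fin.cons false y)
    have hmean : bernoulliExpect p g = bernoulliExpect p h := sum_bernoulliWeight_mul_succ g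
    set M := bernoulliExpect p g
    have hstep (y : Fin n → Bool) :
        p * exp (lam * (g (Fin.cons true y) - M)) +
            (1 - p) * exp (lam * (g (Fin.cons false y) - M))
          ≤ exp (lam * (h y - M)) * exp B := by
      set d := g (Fin.cons true y) - g (Fin.cons false y)
      have htrue : lam * (g (Fin.cons true y) - M) = lam * (h y - M) + lam * ((1 - p) * d) := by
        simp only [h, d]; ring
      have hfalse : lam * (g (Fin.cons false y) - M) = lam * (h y - M) + lam * (-(p * d)) := by
        simp only [h, d]; ring
      calc p * exp (lam * (g (Fin.cons true y) - M)) +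
            (1 - p) * exp (lam * (g (Fin.cons false y) - M))
          = exp (lam * (h y - M)) *
              (p * exp (lam * ((1 - p) * d)) + (1 - p) * exp (lam * (-(p * d)))) := by
            rw [htrue, hfalse, exp_add, exp_add]; ring
        _ ≤ exp (lam * (h y - M)) * exp B := by
            gcongr
            exact two_point_mgf_le hp hp1 hlam hlamc (hg.abs_sub_cons_le y)
    calc ∑ x, bernoulliWeight p x * exp (lam * (g x - M))
        = ∑ y, bernoulliWeight p y * (p * exp (lam * (g (Fin.cons true y) - M)) +
            (1 - p) * exp (lam * (g (Fin.cons false y) - M))) := sum_bernoulliWeight_mul_succ _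
      _ ≤ ∑ y, bernoulliWeight p y * (exp (lam * (h y - M)) * exp B) := by
          gcongr with y
          · exact bernoulliWeight_nonneg hp hp1 y
          · exact hstep y
      _ = (∑ y, bernoulliWeight p y * exp (lam * (h y - bernoulliExpect p h))) * exp B := by
          rw [sum_mul, hmean]; simp only [mul_assoc]
      _ ≤ exp (n * B) * exp B := by
          gcongr
          exact ih h ((hg.comp_cons true).convex_combination hp hp1 (hg.comp_cons false))
      _ = exp ((n + 1 : ℕ) * B) := by rw [← exp_add]; push_cast; ring_nf

lemma sum_filter_le_exp_mul_sum {α : Type*} [Fintype α] {w : α → ℝ} (hw : ∀ x, 0 ≤ w x)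
    (Y : α → ℝ) {lam : ℝ} (hlam : 0 ≤ lam) (t : ℝ) :
    ∑ x with t ≤ Y x, w x ≤ exp (-(lam * t)) * ∑ x, w x * exp (lam * Y x) := by
  rw [mul_sum]
  calc ∑ x with t ≤ Y x, w x
      ≤ ∑ x with t ≤ Y x, exp (-(lam * t)) * (w x * exp (lam * Y x)) := by
        refine sum_le_sum fun x hx => ?_
        have hYT : 0 ≤ lam * (Y x - t) := mul_nonneg hlam (sub_nonneg.2 (mem_filter.1 hx).2)
        calc w x ≤ w x * exp (lam * (Y x - t)) := le_mul_of_one_le_right (hw x) (one_le_exp hYT)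
          _ = exp (-(lam * t)) * (w x * exp (lam * Y x)) := by
            rw [mul_left_comm, ← exp_add]; ring_nf
    _ ≤ ∑ x, exp (-(lam * t)) * (w x * exp (lam * Y x)) :=
        sum_le_sum_of_subset_of_nonneg (filter_subset _ _) fun x _ _ =>
          mul_nonneg (exp_nonneg _) (mul_nonneg (hw x) (exp_nonneg _))

lemma sum_filter_le_abs_le {α : Type*} [Fintype α] {w : α → ℝ} (hw : ∀ x, 0 ≤ w x)
    (Y : α → ℝ) (t : ℝ) :
    ∑ x with t ≤ |Y x|, w x ≤ ∑ x with t ≤ Y x, w x + ∑ x with t ≤ -Y x, w x := by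
  classical
  rw [filter_congr fun x _ => le_abs, filter_or, ← sum_union_inter]
  exact le_add_of_nonneg_right (sum_nonneg fun x _ => hw x)

section Tail

variable {p c t : ℝ} {n : ℕ}

lemma bernoulli_upper_tail_le_exp_of_lt (hp : 0 ≤ p) (hp1 : p ≤ 1) (g : (Fin n → Bool) → ℝ)
    (hg : BoundedDifferences g c) {lam : ℝ} (hlam : 0 ≤ lam) (hlamc : lam * c < 3) :
    ∑ x with t ≤ g x - bernoulliExpect p g, bernoulliWeight p x ≤
      exp (-(lam * t) + n * p * (1 - p) * c ^ 2 * (lam ^ 2 / (2 * (1 - lam * c / 3)))) := by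
  calc ∑ x with t ≤ g x - bernoulliExpect p g, bernoulliWeight p x
      ≤ exp (-(lam * t)) * ∑ x, bernoulliWeight p x * exp (lam * (g x - bernoulliExpect p g)) :=
        sum_filter_le_exp_mul_sum (bernoulliWeight_nonneg hp hp1) _ hlam t
    _ ≤ exp (-(lam * t)) *
          exp (n * (p * (1 - p) * c ^ 2 * (lam ^ 2 / (2 * (1 - lam * c / 3))))) := by
        gcongr
        exact sum_bernoulliWeight_mul_exp_le hp hp1 hlam hlamc g hg
    _ = _ := by rw [← exp_add]; ring_nf

theorem bernoulli_upper_tail_le (hp : 0 ≤ p) (hp1 : p ≤ 1) (hc : 0 < c)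
    (g : (Fin n → Bool) → ℝ) (hg : BoundedDifferences g c) (ht : 0 < t) :
    ∑ x with t ≤ g x - bernoulliExpect p g, bernoulliWeight p x ≤
      exp (-(t ^ 2) / (2 * c ^ 2 * n * p * (1 - p) + 2 * c * t / 3)) := by
  have hV : 0 ≤ (n : ℝ) * p * (1 - p) * c ^ 2 := by have := sub_nonneg.2 hp1; positivity
  rcases hV.eq_or_lt with hV0 | hVpos
  · -- here `t / (V + c t / 3) = 3 / c` is not admissible, but `3 / (2 c)` gives the same bound
    have hlamc : 3 / (2 * c) * c < 3 := by field_simp; norm_num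
    convert bernoulli_upper_tail_le_exp_of_lt hp hp1 g hg (by positivity) hlamc using 2
    rw [show 2 * c ^ 2 * n * p * (1 - p) = 2 * (n * p * (1 - p) * c ^ 2) by ring, ← hV0]
    field_simp
    ring
  · set V := (n : ℝ) * p * (1 - p) * c ^ 2
    have hS : 0 < V + c * t / 3 := by positivity
    have hlamc : t / (V + c * t / 3) * c < 3 := by
      rw [div_mul_eq_mul_div, div_lt_iff₀ hS]; linarith
    convert bernoulli_upper_tail_le_exp_of_lt hp hp1 g hg (div_pos ht hS).le hlamc using 2
    have h1 : 1 - t / (V + c * t / 3) * c / 3 = V / (V + c * t / 3) := by field_simp; ring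
    rw [h1, show 2 * c ^ 2 * n * p * (1 - p) = 2 * V by ring]
    field_simp
    ring

theorem bernoulli_abs_tail_le (hp : 0 ≤ p) (hp1 : p ≤ 1) (hc : 0 < c)
    (g : (Fin n → Bool) → ℝ) (hg : BoundedDifferences g c) (ht : 0 < t) :
    ∑ x with t ≤ |g x - bernoulliExpect p g|, bernoulliWeight p x ≤
      2 * exp (-(t ^ 2) / (2 * c ^ 2 * n * p * (1 - p) + 2 * c * t / 3)) := by
  have hupper := bernoulli_upper_tail_le hp hp1 hc g hg ht
  have hlower := bernoulli_upper_tail_le hp hp1 hc _ hg.neg ht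
  rw [bernoulliExpect_neg] at hlower
  simp only [neg_sub_neg, ← neg_sub (g _)] at hlower
  linarith [sum_filter_le_abs_le (bernoulliWeight_nonneg hp hp1)
    (fun x => g x - bernoulliExpect p g) t]

end Tail

section Law

variable {Ω : Type*} [MeasurableSpace Ω] {μ : Measure Ω}

lemma integral_comp_eq_sum_of_measure_preimage {α : Type*} [Fintype α] [MeasurableSpace α]
    [MeasurableSingletonClass α] [IsFiniteMeasure μ] {T : Ω → α} {w : α → ℝ}
    (hT : Measurable T) (hw : ∀ x, 0 ≤ w x)
    (hlaw : ∀ x, μ (T ⁻¹' {x}) = ENNReal.ofReal (w x)) (f : α → ℝ) :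
    ∫ ω, f (T ω) ∂μ = ∑ x, w x * f x := by
  rw [← integral_map hT.aemeasurable (measurable_of_finite f).aestronglyMeasurable,
    integral_fintype .of_finite]
  refine sum_congr rfl fun x _ => ?_
  rw [measureReal_def, Measure.map_apply hT (measurableSet_singleton x), hlaw,
    ENNReal.toReal_ofReal (hw x), smul_eq_mul]

lemma measure_preimage_finset_eq_sum {α : Type*} [MeasurableSpace α]
    [MeasurableSingletonClass α] {T : Ω → α} {w : α → ℝ}
    (hT : Measurable T) (hw : ∀ x, 0 ≤ w x)
    (hlaw : ∀ x, μ (T ⁻¹' {x}) = ENNReal.ofReal (w x)) (s : Finset α) :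
    μ (T ⁻¹' s) = ENNReal.ofReal (∑ x ∈ s, w x) := by
  rw [← sum_measure_preimage_singleton s fun x _ => hT (measurableSet_singleton x),
    ENNReal.ofReal_sum_of_nonneg fun x _ => hw x]
  exact sum_congr rfl fun x _ => hlaw x

variable [IsProbabilityMeasure μ] {p : ℝ}

lemma measure_preimage_bool_eq {Y : Ω → Bool} (hY : Measurable Y) (hp : 0 ≤ p)
    (hbern : μ (Y ⁻¹' {true}) = ENNReal.ofReal p) (b : Bool) :
    μ (Y ⁻¹' {b}) = ENNReal.ofReal (if b then p else 1 - p) := by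
  cases b
  · have hcompl : Y ⁻¹' {false} = (Y ⁻¹' {true})ᶜ := by ext; simp
    rw [hcompl, prob_compl_eq_one_sub (hY (measurableSet_singleton true)), hbern,
      if_neg Bool.false_ne_true, ENNReal.ofReal_sub _ hp, ENNReal.ofReal_one]
  · exact hbern

lemma measure_preimage_singleton_eq_bernoulliWeight {n : ℕ} (hp : 0 ≤ p) (hp1 : p ≤ 1)
    {X : Fin n → Ω → Bool} (hX : ∀ i, Measurable (X i)) (hindep : iIndepFun X μ)
    (hbern : ∀ i, μ {ω | X i ω = true} = ENNReal.ofReal p) (x : Fin n → Bool) :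
    μ ((fun ω i => X i ω) ⁻¹' {x}) = ENNReal.ofReal (bernoulliWeight p x) := by
  have hcyl :
      (fun ω i => X i ω) ⁻¹' {x} = ⋂ i ∈ (univ : Finset (Fin n)), X i ⁻¹' {x i} := by
    ext ω; simp [funext_iff]
  rw [hcyl, hindep.measure_inter_preimage_eq_mul _ fun i _ => measurableSet_singleton (x i),
    bernoulliWeight, ENNReal.ofReal_prod_of_nonneg fun i _ => by cases x i <;> simp [hp, hp1]]
  exact prod_congr rfl fun i _ => measure_preimage_bool_eq (hX i) hp (hbern i) (x i)

end Law

/-- Strengthened McDiarmid inequality for biased Bernoulli variables: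
if `X_1, ..., X_n` are i.i.d. Bernoulli(p) and `f` has bounded differences with
constant `c`, then for every `t > 0`,
`Pr[|f(X) - E f(X)| ≥ t] ≤ 2 exp(-t² / (2 c² n p (1-p) + 2 c t / 3))`. -/
theorem stronger_mcdiarmid
    {Ω : Type*} [MeasurableSpace Ω] (μ : Measure Ω) [IsProbabilityMeasure μ]
    {n : ℕ} (p c : ℝ) (hp : 0 ≤ p) (hp1 : p ≤ 1) (hc : 0 < c)
    (X : Fin n → Ω → Bool) (hXmeas : ∀ i, Measurable (X i))
    (hindep : iIndepFun X μ)
    (hbern : ∀ i, μ {ω | X i ω = true} = ENNReal.ofReal p)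
    (f : (Fin n → Bool) → ℝ) (hf : BoundedDifferences f c)
    (t : ℝ) (ht : 0 < t) :
    μ {ω | t ≤ |f (fun i => X i ω) - ∫ ω', f (fun i => X i ω') ∂μ|}
      ≤ ENNReal.ofReal
          (2 * exp (-(t ^ 2) / (2 * c ^ 2 * n * p * (1 - p) + 2 * c * t / 3))) := by
  have hT : Measurable fun ω i => X i ω := measurable_pi_lambda _ hXmeas
  have hw := bernoulliWeight_nonneg (n := n) hp hp1
  have hlaw := measure_preimage_singleton_eq_bernoulliWeight hp hp1 hXmeas hindep hbern
  have hmean : ∫ ω, f (fun i => X i ω) ∂μ = bernoulliExpect p f :=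
    integral_comp_eq_sum_of_measure_preimage hT hw hlaw f
  have hevent : {ω | t ≤ |f (fun i => X i ω) - ∫ ω', f (fun i => X i ω') ∂μ|} =
      (fun ω i => X i ω) ⁻¹' ↑({x | t ≤ |f x - bernoulliExpect p f|} : Finset _) := by
    ext; simp [hmean]
  rw [hevent, measure_preimage_finset_eq_sum hT hw hlaw]
  exact ENNReal.ofReal_le_ofReal (bernoulli_abs_tail_le hp hp1 hc f hf ht)
end

section
/- Let M_0, M_1, ..., M_n be a martingale with |M_k - M_{k-1}| ≤ c almost surely and Σ_{k=1}^n Var(M_k - M_{k-1} | F_{k-1}) ≤ V almost surely. Then for all t > 0, Pr[|M_n - M_0| ≥ t] ≤ 2·exp(-t² / (2V + 2ct/3)). -/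
open MeasureTheory ProbabilityTheory Real Finset

/-!
For `0 ≤ l < 3 / c` put `ψ l = l ^ 2 / (2 * (1 - l * c / 3))` (`bernsteinCoeff c l`).
The elementary bound `exp u ≤ 1 + u + u ^ 2 / (2 * (1 - b / 3))` for `u ≤ b < 3` shows that an
increment `D` with `|D| ≤ c` and vanishing conditional mean satisfies
`𝔼[exp (l D) | ℱ] ≤ exp (ψ l * 𝔼[D ^ 2 | ℱ])`. Hence `exp (l (M k - M 0) - ψ l * ⟨M⟩ k)` is a
supermartingale, `⟨M⟩` being the predictable quadratic variation, so
`𝔼[exp (l (M n - M 0))] ≤ exp (ψ l * V)`, and the Chernoff bound with `l = t / (V + c t / 3)`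
gives the one-sided tail `exp (-t ^ 2 / (2 V + 2 c t / 3))` when `V > 0`. Applying it to `-M`
gives the factor `2`, and `V = 0` is reached by letting `V' ↓ V`, the bound being continuous in `V`.
-/

namespace Real

theorem exp_le_one_add_add_sq_div_two_of_nonpos {u : ℝ} (hu : u ≤ 0) :
    exp u ≤ 1 + u + u ^ 2 / 2 := by
  have hanti : AntitoneOn (fun x => 1 + x + x ^ 2 / 2 - exp x) (Set.Iic 0) := by
    refine antitoneOn_of_hasDerivWithinAt_nonpos (f' := fun x => 1 + x - exp x) (convex_Iic 0)
      (by fun_prop) (fun x _ => ?_) (fun x _ => by linarith [add_one_le_exp x])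
    exact ((((hasDerivAt_id x).const_add 1).add ((hasDerivAt_pow 2 x).div_const 2)).sub
      (hasDerivAt_exp x)).hasDerivWithinAt.congr_deriv (by simp)
  simpa using hanti (Set.mem_Iic.2 hu) (Set.mem_Iic.2 le_rfl) hu

theorem three_sub_mul_exp_le {u : ℝ} (hu : 0 ≤ u) :
    (3 - u) * exp u ≤ 3 + 2 * u + u ^ 2 / 2 := by
  have hmono : MonotoneOn (fun x => (3 + 2 * x + x ^ 2 / 2) * exp (-x) + x) (Set.Ici 0) := by
    refine monotoneOn_of_hasDerivWithinAt_nonneg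
      (f' := fun x => 1 - (1 + x + x ^ 2 / 2) * exp (-x)) (convex_Ici 0) (by fun_prop)
      (fun x _ => ?_) (fun x hx => ?_)
    · exact (((((hasDerivAt_id x).const_mul 2).const_add 3).add
        ((hasDerivAt_pow 2 x).div_const 2)).mul (hasDerivAt_neg x).exp).add
        (hasDerivAt_id x) |>.hasDerivWithinAt.congr_deriv (by simp; ring)
    · rw [interior_Ici, Set.mem_Ioi] at hx
      have := quadratic_le_exp_of_nonneg hx.le
      rw [sub_nonneg, ← le_div_iff₀ (exp_pos _), exp_neg, div_inv_eq_mul, one_mul]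
      exact this
  have h : 3 - u ≤ (3 + 2 * u + u ^ 2 / 2) * (exp u)⁻¹ := by
    have := hmono (Set.mem_Ici.2 le_rfl) (Set.mem_Ici.2 hu) hu
    simp only [exp_neg] at this
    norm_num at this
    linarith
  rwa [le_mul_inv_iff₀ (exp_pos u)] at h

theorem exp_le_one_add_add_sq_div {u b : ℝ} (hb : 0 ≤ b) (hb3 : b < 3) (hu : u ≤ b) :
    exp u ≤ 1 + u + u ^ 2 / (2 * (1 - b / 3)) := by
  have hden : 0 < 2 * (1 - b / 3) := by linarith
  rcases le_or_gt u 0 with hu0 | hu0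
  · calc exp u ≤ 1 + u + u ^ 2 / 2 := exp_le_one_add_add_sq_div_two_of_nonpos hu0
      _ ≤ 1 + u + u ^ 2 / (2 * (1 - b / 3)) := by
        gcongr
        linarith
  · have h3u : 0 < 3 - u := by linarith
    calc exp u ≤ (3 + 2 * u + u ^ 2 / 2) / (3 - u) := by
          rw [le_div_iff₀ h3u, mul_comm]; exact three_sub_mul_exp_le hu0.le
      _ = 1 + u + u ^ 2 / (2 * (1 - u / 3)) := by field_simp; ring
      _ ≤ 1 + u + u ^ 2 / (2 * (1 - b / 3)) := by
        gcongr

end Real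

noncomputable def bernsteinCoeff (c l : ℝ) : ℝ := l ^ 2 / (2 * (1 - l * c / 3))

theorem bernsteinCoeff_nonneg {c l : ℝ} (hlc : l * c < 3) : 0 ≤ bernsteinCoeff c l :=
  div_nonneg (sq_nonneg l) (by linarith)

section Martingale

variable {Ω : Type*} {m m0 : MeasurableSpace Ω}

noncomputable def predictableQuadVar (μ : Measure Ω) (ℱ : Filtration ℕ m0) (M : ℕ → Ω → ℝ)
    (n : ℕ) (ω : Ω) : ℝ :=
  ∑ k ∈ range n, (μ[(fun ω' => (M (k + 1) ω' - M k ω') ^ 2) | ℱ k]) ω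

variable {μ : Measure Ω} {ℱ : Filtration ℕ m0} {M : ℕ → Ω → ℝ} {c : ℝ}

theorem integrable_exp_mul_of_abs_le [IsFiniteMeasure μ] {X : Ω → ℝ}
    (hX : AEStronglyMeasurable X μ) (hXc : ∀ᵐ ω ∂μ, |X ω| ≤ c) (l : ℝ) :
    Integrable (fun ω => exp (l * X ω)) μ :=
  .of_bound (continuous_exp.comp_aestronglyMeasurable (hX.const_mul l)) (exp (|l| * c)) (by
    filter_upwards [hXc] with ω hω
    rw [norm_of_nonneg (exp_pos _).le, exp_le_exp]
    calc l * X ω ≤ |l| * |X ω| := (le_abs_self _).trans (abs_mul _ _).le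
      _ ≤ |l| * c := mul_le_mul_of_nonneg_left hω (abs_nonneg l))

theorem condExp_exp_mul_le_of_condExp_eq_zero [IsFiniteMeasure μ] (hm : m ≤ m0)
    {X : Ω → ℝ} {l : ℝ} (hX : AEStronglyMeasurable X μ) (hXc : ∀ᵐ ω ∂μ, |X ω| ≤ c)
    (hX0 : μ[X | m] =ᵐ[μ] 0) (hl : 0 ≤ l) (hlc : l * c < 3) :
    μ[fun ω => exp (l * X ω) | m]
      ≤ᵐ[μ] fun ω => exp (bernsteinCoeff c l * μ[fun ω => X ω ^ 2 | m] ω) := by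
  set ψ := bernsteinCoeff c l
  have hX_int : Integrable X μ := .of_bound hX c (by simpa only [norm_eq_abs] using hXc)
  have hX2_int : Integrable (fun ω => X ω ^ 2) μ := .of_bound (hX.pow 2) (c ^ 2) (by
    filter_upwards [hXc] with ω hω
    simpa [norm_eq_abs] using pow_le_pow_left₀ (abs_nonneg _) hω 2)
  have hpt : (fun ω => exp (l * X ω)) ≤ᵐ[μ] fun ω => 1 + l * X ω + ψ * X ω ^ 2 := by
    filter_upwards [hXc] with ω hω
    have hc : 0 ≤ c := (abs_nonneg _).trans hω
    calc exp (l * X ω) ≤ 1 + l * X ω + (l * X ω) ^ 2 / (2 * (1 - l * c / 3)) :=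
          exp_le_one_add_add_sq_div (mul_nonneg hl hc) hlc
            (mul_le_mul_of_nonneg_left (abs_le.1 hω).2 hl)
      _ = 1 + l * X ω + ψ * X ω ^ 2 := by simp only [ψ, bernsteinCoeff]; ring
  have hlin : μ[fun ω => 1 + l * X ω + ψ * X ω ^ 2 | m]
      =ᵐ[μ] fun ω => 1 + l * μ[X | m] ω + ψ * μ[fun ω => X ω ^ 2 | m] ω := by
    change μ[(fun _ => (1 : ℝ)) + l • X + ψ • (fun ω => X ω ^ 2) | m] =ᵐ[μ] _
    filter_upwards [condExp_add ((integrable_const 1).add (hX_int.smul l)) (hX2_int.smul ψ) m,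
      condExp_add (integrable_const 1) (hX_int.smul l) m, condExp_smul l X m,
      condExp_smul ψ (fun ω => X ω ^ 2) m] with ω h1 h2 h3 h4
    simp only [Pi.add_apply, Pi.smul_apply, smul_eq_mul] at h1 h2 h3 h4
    rw [h1, h2, h3, h4, condExp_const hm]
  have hrhs_int : Integrable (fun ω => 1 + l * X ω + ψ * X ω ^ 2) μ :=
    ((integrable_const 1).add (hX_int.const_mul l)).add (hX2_int.const_mul ψ)
  filter_upwards [condExp_mono (m := m) (integrable_exp_mul_of_abs_le hX hXc l) hrhs_int hpt,
    hlin, hX0] with ω h1 h2 h3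
  rw [h2, h3] at h1
  simp only [Pi.zero_apply, mul_zero, add_zero] at h1
  linarith [add_one_le_exp (ψ * μ[fun ω => X ω ^ 2 | m] ω)]

theorem stronglyMeasurable_predictableQuadVar {n k : ℕ} (hk : k ≤ n + 1) :
    StronglyMeasurable[ℱ n] (predictableQuadVar μ ℱ M k) :=
  Finset.stronglyMeasurable_fun_sum _ fun j hj =>
    stronglyMeasurable_condExp.mono (ℱ.mono (by rw [mem_range] at hj; omega))

theorem predictableQuadVar_nonneg (k : ℕ) : 0 ≤ᵐ[μ] predictableQuadVar μ ℱ M k := by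
  have h := fun j => condExp_nonneg (μ := μ) (m := ℱ j)
    (f := fun ω' => (M (j + 1) ω' - M j ω') ^ 2) (.of_forall fun ω => sq_nonneg _)
  filter_upwards [ae_all_iff.2 h] with ω hω
  exact Finset.sum_nonneg fun j _ => hω j

theorem predictableQuadVar_neg : predictableQuadVar μ ℱ (-M) = predictableQuadVar μ ℱ M := by
  ext n ω
  simp only [predictableQuadVar, Pi.neg_apply, neg_sub_neg, ← neg_sub (M (_ + 1) _), neg_sq]

theorem ae_abs_sub_zero_le_mul (hbdd : ∀ k, ∀ᵐ ω ∂μ, |M (k + 1) ω - M k ω| ≤ c) (k : ℕ) :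
    ∀ᵐ ω ∂μ, |M k ω - M 0 ω| ≤ k * c := by
  induction k with
  | zero => simp
  | succ k ih =>
    filter_upwards [ih, hbdd k] with ω h1 h2
    calc |M (k + 1) ω - M 0 ω| = |(M (k + 1) ω - M k ω) + (M k ω - M 0 ω)| := by ring_nf
      _ ≤ c + k * c := (abs_add_le _ _).trans (add_le_add h2 h1)
      _ = (k + 1 : ℕ) * c := by push_cast; ring

theorem MeasureTheory.Martingale.condExp_succ_sub_eq_zero (hM : Martingale M ℱ μ) (k : ℕ) :
    μ[fun ω => M (k + 1) ω - M k ω | ℱ k] =ᵐ[μ] 0 := by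
  filter_upwards [condExp_sub (hM.integrable (k + 1)) (hM.integrable k) (ℱ k),
    hM.condExp_ae_eq (by omega : k ≤ k + 1), hM.condExp_ae_eq (le_refl k)] with ω h h1 h2
  exact h.trans (by rw [Pi.sub_apply, h1, h2, sub_self, Pi.zero_apply])

theorem supermartingale_exp_mul_sub_predictableQuadVar [IsFiniteMeasure μ]
    (hM : Martingale M ℱ μ) (hbdd : ∀ k, ∀ᵐ ω ∂μ, |M (k + 1) ω - M k ω| ≤ c) {l : ℝ}
    (hl : 0 ≤ l) (hlc : l * c < 3) :
    Supermartingale (fun k ω => exp (l * (M k ω - M 0 ω)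
      - bernsteinCoeff c l * predictableQuadVar μ ℱ M k ω)) ℱ μ := by
  set ψ := bernsteinCoeff c l
  have hmeas {n k : ℕ} (hk : k ≤ n + 1) : StronglyMeasurable[ℱ n]
      (fun ω => exp (l * (M n ω - M 0 ω) - ψ * predictableQuadVar μ ℱ M k ω)) :=
    continuous_exp.comp_stronglyMeasurable
      ((((hM.stronglyAdapted n).sub ((hM.stronglyAdapted 0).mono (ℱ.mono n.zero_le))).const_mul
        l).sub ((stronglyMeasurable_predictableQuadVar hk).const_mul ψ))
  have hsub_meas (j k : ℕ) : AEStronglyMeasurable (fun ω => M j ω - M k ω) μ :=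
    ((hM.integrable j).sub (hM.integrable k)).aestronglyMeasurable
  have hint (k : ℕ) : Integrable
      (fun ω => exp (l * (M k ω - M 0 ω) - ψ * predictableQuadVar μ ℱ M k ω)) μ := by
    refine (integrable_exp_mul_of_abs_le (hsub_meas k 0) (ae_abs_sub_zero_le_mul hbdd k) l).mono'
      ((hmeas (by omega)).mono (ℱ.le k)).aestronglyMeasurable ?_
    filter_upwards [predictableQuadVar_nonneg (ℱ := ℱ) (M := M) k] with ω hω
    rw [norm_of_nonneg (exp_pos _).le, exp_le_exp]
    linarith [mul_nonneg (bernsteinCoeff_nonneg hlc) hω]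
  refine supermartingale_nat (fun k => hmeas (by omega)) hint fun k => ?_
  have hsplit :
      (fun ω => exp (l * (M (k + 1) ω - M 0 ω) - ψ * predictableQuadVar μ ℱ M (k + 1) ω))
      = (fun ω => exp (l * (M k ω - M 0 ω) - ψ * predictableQuadVar μ ℱ M (k + 1) ω))
        * fun ω => exp (l * (M (k + 1) ω - M k ω)) := by
    ext ω
    rw [Pi.mul_apply, ← exp_add]
    ring_nf
  -- `predictableQuadVar μ ℱ M (k + 1)` is `ℱ k`-measurable, so the first factor pulls out.
  have hpull := condExp_mul_of_stronglyMeasurable_left (hmeas le_rfl) (hsplit ▸ hint (k + 1))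
    (integrable_exp_mul_of_abs_le (hsub_meas (k + 1) k) (hbdd k) l)
  rw [hsplit]
  filter_upwards [hpull, condExp_exp_mul_le_of_condExp_eq_zero (ℱ.le k) (hsub_meas (k + 1) k)
    (hbdd k) (hM.condExp_succ_sub_eq_zero k) hl hlc] with ω h1 h2
  rw [h1, Pi.mul_apply]
  refine (mul_le_mul_of_nonneg_left h2 (exp_pos _).le).trans_eq ?_
  rw [← exp_add, predictableQuadVar, sum_range_succ, ← predictableQuadVar]
  congr 1
  ring

theorem measureReal_sub_zero_ge_le [IsProbabilityMeasure μ] (hM : Martingale M ℱ μ)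
    (hbdd : ∀ k, ∀ᵐ ω ∂μ, |M (k + 1) ω - M k ω| ≤ c) {V : ℝ} {n : ℕ}
    (hvar : ∀ᵐ ω ∂μ, predictableQuadVar μ ℱ M n ω ≤ V) {l : ℝ} (hl : 0 ≤ l) (hlc : l * c < 3)
    (t : ℝ) : μ.real {ω | t ≤ M n ω - M 0 ω} ≤ exp (-l * t + bernsteinCoeff c l * V) := by
  set ψ := bernsteinCoeff c l
  have hsuper := supermartingale_exp_mul_sub_predictableQuadVar hM hbdd hl hlc
  have hint : ∫ ω, exp (l * (M n ω - M 0 ω) - ψ * predictableQuadVar μ ℱ M n ω) ∂μ ≤ 1 := by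
    simpa [predictableQuadVar] using hsuper.setIntegral_le n.zero_le MeasurableSet.univ
  have hsub_int : Integrable (fun ω => exp (l * (M n ω - M 0 ω))) μ :=
    integrable_exp_mul_of_abs_le ((hM.integrable n).sub (hM.integrable 0)).aestronglyMeasurable
      (ae_abs_sub_zero_le_mul hbdd n) l
  have hmgf : mgf (fun ω => M n ω - M 0 ω) μ l ≤ exp (ψ * V) := calc
    mgf (fun ω => M n ω - M 0 ω) μ l = ∫ ω, exp (l * (M n ω - M 0 ω)) ∂μ := rfl
    _ ≤ ∫ ω, exp (ψ * V) * exp (l * (M n ω - M 0 ω) - ψ * predictableQuadVar μ ℱ M n ω) ∂μ := by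
      refine integral_mono_ae hsub_int ((hsuper.integrable n).const_mul _) ?_
      filter_upwards [hvar] with ω hω
      rw [← exp_add, exp_le_exp]
      linarith [mul_le_mul_of_nonneg_left hω (bernsteinCoeff_nonneg hlc)]
    _ = exp (ψ * V) * ∫ ω, exp (l * (M n ω - M 0 ω) - ψ * predictableQuadVar μ ℱ M n ω) ∂μ :=
      integral_const_mul _ _
    _ ≤ exp (ψ * V) := mul_le_of_le_one_right (exp_pos _).le hint
  calc μ.real {ω | t ≤ M n ω - M 0 ω} ≤ exp (-l * t) * mgf (fun ω => M n ω - M 0 ω) μ l :=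
        measure_ge_le_exp_mul_mgf t hl hsub_int
    _ ≤ exp (-l * t) * exp (ψ * V) := by gcongr
    _ = exp (-l * t + ψ * V) := (exp_add _ _).symm

theorem measure_sub_zero_ge_le_freedman [IsProbabilityMeasure μ] (hM : Martingale M ℱ μ)
    (hbdd : ∀ k, ∀ᵐ ω ∂μ, |M (k + 1) ω - M k ω| ≤ c) (hc : 0 ≤ c) {V : ℝ} (hV : 0 < V) {n : ℕ}
    (hvar : ∀ᵐ ω ∂μ, predictableQuadVar μ ℱ M n ω ≤ V) {t : ℝ} (ht : 0 ≤ t) :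
    μ {ω | t ≤ M n ω - M 0 ω} ≤ ENNReal.ofReal (exp (-(t ^ 2) / (2 * V + 2 * c * t / 3))) := by
  have hden : 0 < V + c * t / 3 := by positivity
  set l := t / (V + c * t / 3) with hl_def
  have hl : 0 ≤ l := by positivity
  have hlc' : 1 - l * c / 3 = V / (V + c * t / 3) := by rw [hl_def]; field_simp; ring
  have hlc : l * c < 3 := by linarith [show 0 < V / (V + c * t / 3) by positivity]
  have hexp : -l * t + bernsteinCoeff c l * V = -(t ^ 2) / (2 * V + 2 * c * t / 3) := by
    rw [bernsteinCoeff, hlc', hl_def]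
    field_simp
    ring
  rw [← ofReal_measureReal, ← hexp]
  exact ENNReal.ofReal_le_ofReal (measureReal_sub_zero_ge_le hM hbdd hvar hl hlc t)

theorem measure_abs_sub_zero_ge_le_freedman [IsProbabilityMeasure μ] (hM : Martingale M ℱ μ)
    (hbdd : ∀ k, ∀ᵐ ω ∂μ, |M (k + 1) ω - M k ω| ≤ c) (hc : 0 ≤ c) {V : ℝ} (hV : 0 < V) {n : ℕ}
    (hvar : ∀ᵐ ω ∂μ, predictableQuadVar μ ℱ M n ω ≤ V) {t : ℝ} (ht : 0 ≤ t) :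
    μ {ω | t ≤ |M n ω - M 0 ω|}
      ≤ ENNReal.ofReal (2 * exp (-(t ^ 2) / (2 * V + 2 * c * t / 3))) := by
  have hbdd_neg (k : ℕ) : ∀ᵐ ω ∂μ, |(-M) (k + 1) ω - (-M) k ω| ≤ c := by
    filter_upwards [hbdd k] with ω hω
    simp only [Pi.neg_apply, neg_sub_neg]
    rwa [abs_sub_comm]
  have hvar_neg : ∀ᵐ ω ∂μ, predictableQuadVar μ ℱ (-M) n ω ≤ V := by
    rwa [predictableQuadVar_neg]
  calc μ {ω | t ≤ |M n ω - M 0 ω|}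
      ≤ μ ({ω | t ≤ M n ω - M 0 ω} ∪ {ω | t ≤ (-M) n ω - (-M) 0 ω}) := by
        refine measure_mono fun ω (hω : t ≤ |M n ω - M 0 ω|) => ?_
        rcases le_abs.1 hω with h | h
        · exact Or.inl h
        · exact Or.inr (show t ≤ -M n ω - -M 0 ω by linarith)
    _ ≤ μ {ω | t ≤ M n ω - M 0 ω} + μ {ω | t ≤ (-M) n ω - (-M) 0 ω} := measure_union_le _ _
    _ ≤ ENNReal.ofReal (exp (-(t ^ 2) / (2 * V + 2 * c * t / 3)))
        + ENNReal.ofReal (exp (-(t ^ 2) / (2 * V + 2 * c * t / 3))) :=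
      add_le_add (measure_sub_zero_ge_le_freedman hM hbdd hc hV hvar ht)
        (measure_sub_zero_ge_le_freedman hM.neg hbdd_neg hc hV hvar_neg ht)
    _ = ENNReal.ofReal (2 * exp (-(t ^ 2) / (2 * V + 2 * c * t / 3))) := by
      rw [← ENNReal.ofReal_add (exp_pos _).le (exp_pos _).le, ← two_mul]

end Martingale

/-- Freedman's inequality (martingale Bernstein inequality): if `(M_k)` is a
martingale with increments bounded by `c` and total conditional variance at most
`V`, then `Pr[|M_n - M_0| ≥ t] ≤ 2 exp(-t² / (2V + 2ct/3))` for all `t > 0`. -/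
theorem freedman_inequality
    {Ω : Type*} {m0 : MeasurableSpace Ω} (μ : Measure Ω) [IsProbabilityMeasure μ]
    (ℱ : Filtration ℕ m0) (M : ℕ → Ω → ℝ)
    (hM : Martingale M ℱ μ)
    (c V : ℝ) (hc : 0 < c) (hV : 0 ≤ V)
    (n : ℕ)
    (hbdd : ∀ k, ∀ᵐ ω ∂μ, |M (k + 1) ω - M k ω| ≤ c)
    (hvar : ∀ᵐ ω ∂μ,
      ∑ k ∈ range n,
        (μ[(fun ω' => (M (k + 1) ω' - M k ω') ^ 2) | ℱ k]) ω ≤ V)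
    (t : ℝ) (ht : 0 < t) :
    μ {ω | t ≤ |M n ω - M 0 ω|}
      ≤ ENNReal.ofReal (2 * exp (-(t ^ 2) / (2 * V + 2 * c * t / 3))) := by
  have hbound : ∀ V' > V, μ {ω | t ≤ |M n ω - M 0 ω|}
      ≤ ENNReal.ofReal (2 * exp (-(t ^ 2) / (2 * V' + 2 * c * t / 3))) := fun V' hV' =>
    measure_abs_sub_zero_ge_le_freedman hM hbdd hc.le (hV.trans_lt hV')
      (hvar.mono fun _ h => h.trans hV'.le) ht.le
  have hden : 2 * V + 2 * c * t / 3 ≠ 0 := by positivity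
  have hcont : ContinuousAt
      (fun V' => ENNReal.ofReal (2 * exp (-(t ^ 2) / (2 * V' + 2 * c * t / 3)))) V :=
    ENNReal.continuous_ofReal.continuousAt.comp (by fun_prop (disch := exact hden))
  exact ge_of_tendsto (hcont.tendsto.mono_left (nhdsWithin_le_nhds (s := Set.Ioi V)))
    (eventually_nhdsWithin_of_forall hbound)
end

section
/- For two-qubit quantum strategies, there exist Hermitian observables A_0, A_1, B_0, B_1 with eigenvalues in {-1,1}, with A_i acting on the first qubit and B_j on the second, and a two-qubit state ρ, such that Tr[ρ(A_0⊗B_0 + A_0⊗B_1 + A_1⊗B_0 - A_1⊗B_1)] = 2√2. -/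
open Matrix
open scoped Kronecker ComplexOrder

noncomputable def sQ : ℂ := (Real.sqrt 2 : ℝ)

lemma sQ_sq : sQ * sQ = 2 := by
  unfold sQ; norm_cast; rw [Real.mul_self_sqrt]; norm_num

lemma sQ_ne : sQ ≠ 0 := by
  unfold sQ
  simp only [ne_eq, Complex.ofReal_eq_zero]
  positivity

lemma star_sQ : starRingEnd ℂ sQ = sQ := by
  unfold sQ; exact Complex.conj_ofReal _

noncomputable def vPhi : Fin 2 × Fin 2 → ℂ :=
  fun p => if p.1 = p.2 then 1 / sQ else 0

noncomputable def rhoPhi : Matrix (Fin 2 × Fin 2) (Fin 2 × Fin 2) ℂ :=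
  Matrix.replicateCol (Fin 1) vPhi * (Matrix.replicateCol (Fin 1) vPhi)ᴴ

lemma rho_entry (i j : Fin 2 × Fin 2) :
    rhoPhi i j = (if i.1 = i.2 then 1/sQ else 0) * (if j.1 = j.2 then 1/sQ else 0) := by
  simp [rhoPhi, Matrix.mul_apply, vPhi, Matrix.replicateCol, Matrix.conjTranspose_apply,
    apply_ite (starRingEnd ℂ), star_sQ]

/-- Tsirelson bound attainment: there exist two-qubit binary observables
`A₀, A₁` (on the first qubit), `B₀, B₁` (on the second qubit) — Hermitian with
eigenvalues in `{-1,1}`, i.e. squaring to the identity — and a two-qubit state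
`ρ` such that the CHSH expression evaluates to `2√2`. -/
theorem tsirelson_attained :
    ∃ (A B : Fin 2 → Matrix (Fin 2) (Fin 2) ℂ)
      (ρ : Matrix (Fin 2 × Fin 2) (Fin 2 × Fin 2) ℂ),
      (∀ i, (A i).IsHermitian) ∧ (∀ i, A i * A i = 1) ∧
      (∀ j, (B j).IsHermitian) ∧ (∀ j, B j * B j = 1) ∧
      ρ.PosSemidef ∧ ρ.trace = 1 ∧
      (ρ * (A 0 ⊗ₖ B 0 + A 0 ⊗ₖ B 1 + A 1 ⊗ₖ B 0 - A 1 ⊗ₖ B 1)).trace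
        = ((2 * Real.sqrt 2 : ℝ) : ℂ) := by
  refine ⟨![!![0,1;1,0], !![1,0;0,-1]],
          ![!![1/sQ, 1/sQ; 1/sQ, -(1/sQ)], !![-(1/sQ), 1/sQ; 1/sQ, 1/sQ]],
          rhoPhi, ?_, ?_, ?_, ?_, ?_, ?_, ?_⟩
  · intro i
    fin_cases i <;>
    · ext a b
      rw [Matrix.conjTranspose_apply]
      fin_cases a <;> fin_cases b <;> simp
  · intro i
    fin_cases i <;>
    · ext a b
      rw [Matrix.mul_apply, Fin.sum_univ_two]
      fin_cases a <;> fin_cases b <;> simp [Matrix.one_apply]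
  · intro j
    fin_cases j <;>
    · ext a b
      rw [Matrix.conjTranspose_apply]
      fin_cases a <;> fin_cases b <;> simp [star_sQ]
  · intro j
    fin_cases j <;>
    · ext a b
      rw [Matrix.mul_apply, Fin.sum_univ_two]
      fin_cases a <;> fin_cases b <;>
        · simp [Matrix.one_apply]
          try { rw [← mul_inv, sQ_sq]; norm_num }
  · exact Matrix.posSemidef_self_mul_conjTranspose _
  · rw [Matrix.trace]
    simp only [Matrix.diag_apply, Fintype.sum_prod_type, Fin.sum_univ_two, rho_entry]
    simp only [if_true, if_pos rfl]
    norm_num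
    field_simp [sQ_ne]
    linear_combination -sQ_sq
  · rw [Matrix.trace]
    simp only [Matrix.diag_apply, Fintype.sum_prod_type, Fin.sum_univ_two, Matrix.mul_apply,
      rho_entry, Matrix.add_apply, Matrix.sub_apply, Matrix.kroneckerMap_apply]
    norm_num [Matrix.cons_val_zero, Matrix.cons_val_one]
    show _ = 2 * sQ
    field_simp [sQ_ne]
    ring_nf
    linear_combination (-2*sQ^2-4) * sQ_sq
end
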